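/- Let C be a cancellative commutative monoid, V a vertex set, E_X, E_Y edge sets with source and target maps s, t : E_X ⊕ E_Y → V, and suppose there are subsets V_X, V_Y ⊆ V with V = V_X ∪ V_Y such that every edge in E_X has source and target in V_X and every edge in E_Y has source and target in V_Y. Let q : (V →₀ C) → (V →₀ C) be the additive monoid homomorphism that keeps the coefficient of every vertex in V_X ∩ V_Y and sends the coefficients of all other vertices to 0. Then for every 1-cycle c ∈ H₁(X∪Y,C): q(C[s](p_X(c))) = q(C[t](p_X(c))) if and only if c lies in the image of ι : H₁(X,C) ⊕ H₁(Y,C) → H₁(X∪Y,C), ι(a,b) = a + b; and the same holds with p_X replaced by p_Y. -/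

import Mathlib

/-- The first homology `H₁(G,C)` of a graph `G = (E,V,s,t)` with coefficients in a commutative
monoid `C`: the additive submonoid of 1-cycles in `C₁(G,C) = E →₀ C`, i.e. those `c` with
`C[s](c) = C[t](c)`. -/
noncomputable def graphH1 {E V : Type*} (C : Type*) [AddCommMonoid C] (s t : E → V) :
    AddSubmonoid (E →₀ C) where
  carrier := {c | Finsupp.mapDomain s c = Finsupp.mapDomain t c}
  add_mem' := by
    intro a b ha hb
    simp only [Set.mem_setOf_eq, Finsupp.mapDomain_add] at *
    rw [ha, hb]
  zero_mem' := by
    simp only [Set.mem_setOf_eq, Finsupp.mapDomain_zero]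

/-- The part `p_X(c)` of a 1-chain on the edge set `E_X ⊕ E_Y` supported on `E_X`. -/
noncomputable def projX {EX EY C : Type*} [AddCommMonoid C] (c : (EX ⊕ EY) →₀ C) :
    (EX ⊕ EY) →₀ C :=
  Finsupp.filter (fun e => e.isLeft) c

/-- The part `p_Y(c)` of a 1-chain on the edge set `E_X ⊕ E_Y` supported on `E_Y`. -/
noncomputable def projY {EX EY C : Type*} [AddCommMonoid C] (c : (EX ⊕ EY) →₀ C) :
    (EX ⊕ EY) →₀ C :=
  Finsupp.filter (fun e => e.isRight) c

/-- `H₁(X,C)` regarded as a submonoid of `C₁(X ∪ Y, C)`: the 1-cycles supported on `E_X`. -/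
noncomputable def graphH1X {EX EY V : Type*} (C : Type*) [AddCommMonoid C]
    (s t : EX ⊕ EY → V) : AddSubmonoid ((EX ⊕ EY) →₀ C) where
  carrier := {c | (Finsupp.mapDomain s c = Finsupp.mapDomain t c) ∧
    ∀ e : EY, c (Sum.inr e) = 0}
  add_mem' := by
    intro a b ha hb
    refine ⟨?_, fun e => ?_⟩
    · simp only [Set.mem_setOf_eq, Finsupp.mapDomain_add] at *
      rw [ha.1, hb.1]
    · simp [Finsupp.add_apply, ha.2 e, hb.2 e]
  zero_mem' := by
    simp [Finsupp.mapDomain_zero]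

/-- `H₁(Y,C)` regarded as a submonoid of `C₁(X ∪ Y, C)`: the 1-cycles supported on `E_Y`. -/
noncomputable def graphH1Y {EX EY V : Type*} (C : Type*) [AddCommMonoid C]
    (s t : EX ⊕ EY → V) : AddSubmonoid ((EX ⊕ EY) →₀ C) where
  carrier := {c | (Finsupp.mapDomain s c = Finsupp.mapDomain t c) ∧
    ∀ e : EX, c (Sum.inl e) = 0}
  add_mem' := by
    intro a b ha hb
    refine ⟨?_, fun e => ?_⟩
    · simp only [Set.mem_setOf_eq, Finsupp.mapDomain_add] at *
      rw [ha.1, hb.1]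
    · simp [Finsupp.add_apply, ha.2 e, hb.2 e]
  zero_mem' := by
    simp [Finsupp.mapDomain_zero]

/-!
Write `c = p_X c + p_Y c`. Since `c` is a cycle,
`C[s](p_X c) + C[s](p_Y c) = C[t](p_X c) + C[t](p_Y c)`, so by cancellation `p_X c` is a cycle iff
`p_Y c` is, i.e. iff `c` comes from `H₁(X) ⊕ H₁(Y)`. The boundaries of `p_X c` are supported on
`V_X` and those of `p_Y c` on `V_Y`; so on `V_X \ V_Y` the identity above already gives
`C[s](p_X c) = C[t](p_X c)`, and the two can only differ on `V_X ∩ V_Y`, which is what `q` keeps.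
-/

open Finsupp

section Chains

variable {EX EY V C : Type*} [AddCommMonoid C]

theorem projX_add_projY (c : (EX ⊕ EY) →₀ C) : projX c + projY c = c := by
  ext (e | e) <;> simp [projX, projY, filter_apply]

theorem projX_add_of_mem {s t : EX ⊕ EY → V} {a b : (EX ⊕ EY) →₀ C}
    (ha : a ∈ graphH1X C s t) (hb : b ∈ graphH1Y C s t) : projX (a + b) = a := by
  ext (e | e)
  · simp [projX, filter_apply, hb.2 e]
  · simp [projX, ha.2 e]

theorem mapDomain_projX_add_mapDomain_projY_eq {s t : EX ⊕ EY → V} {c : (EX ⊕ EY) →₀ C}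
    (hc : c ∈ graphH1 C s t) :
    mapDomain s (projX c) + mapDomain s (projY c) =
      mapDomain t (projX c) + mapDomain t (projY c) := by
  rw [← mapDomain_add, ← mapDomain_add, projX_add_projY]
  exact hc

theorem mapDomain_projX_apply_eq_zero {f : EX ⊕ EY → V} {A : Set V}
    (hA : ∀ e, f (Sum.inl e) ∈ A) (c : (EX ⊕ EY) →₀ C) :
    ∀ v ∉ A, mapDomain f (projX c) v = 0 := by
  classical
  intro v hv
  refine notMem_support_iff.mp fun hmem => hv ?_
  obtain ⟨a, ha, rfl⟩ := Finset.mem_image.mp (mapDomain_support hmem)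
  rw [projX, support_filter, Finset.mem_filter] at ha
  obtain ⟨e, rfl⟩ := Sum.isLeft_iff.mp ha.2
  exact hA e

theorem mapDomain_projY_apply_eq_zero {f : EX ⊕ EY → V} {B : Set V}
    (hB : ∀ e, f (Sum.inr e) ∈ B) (c : (EX ⊕ EY) →₀ C) :
    ∀ v ∉ B, mapDomain f (projY c) v = 0 := by
  classical
  intro v hv
  refine notMem_support_iff.mp fun hmem => hv ?_
  obtain ⟨a, ha, rfl⟩ := Finset.mem_image.mp (mapDomain_support hmem)
  rw [projY, support_filter, Finset.mem_filter] at ha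
  obtain ⟨e, rfl⟩ := Sum.isRight_iff.mp ha.2
  exact hB e

theorem Finsupp.filter_eq_filter_iff_of_add_eq_add {p : V → Prop} [DecidablePred p] {A B : Set V}
    (hp : ∀ v ∈ A, v ∈ B → p v) {f g f' g' : V →₀ C} (hsum : f + f' = g + g')
    (hf : ∀ v ∉ A, f v = 0) (hg : ∀ v ∉ A, g v = 0)
    (hf' : ∀ v ∉ B, f' v = 0) (hg' : ∀ v ∉ B, g' v = 0) :
    filter p f = filter p g ↔ f = g := by
  refine ⟨fun h => ?_, fun h => h ▸ rfl⟩
  ext v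
  by_cases hpv : p v
  · simpa [filter_apply_pos _ _ hpv] using DFunLike.congr_fun h v
  by_cases hA : v ∈ A
  · have hB : v ∉ B := fun hB => hpv (hp v hA hB)
    simpa [hf' v hB, hg' v hB] using DFunLike.congr_fun hsum v
  · rw [hf v hA, hg v hA]

variable [IsCancelAdd C] {s t : EX ⊕ EY → V} {c : (EX ⊕ EY) →₀ C}

theorem mapDomain_projX_eq_iff_mapDomain_projY_eq (hc : c ∈ graphH1 C s t) :
    mapDomain s (projX c) = mapDomain t (projX c) ↔
      mapDomain s (projY c) = mapDomain t (projY c) := by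
  have hsum := mapDomain_projX_add_mapDomain_projY_eq hc
  constructor
  · intro h
    rw [h] at hsum
    exact add_left_cancel hsum
  · intro h
    rw [h] at hsum
    exact add_right_cancel hsum

theorem exists_mem_graphH1X_mem_graphH1Y_eq_add_iff (hc : c ∈ graphH1 C s t) :
    (∃ a ∈ graphH1X C s t, ∃ b ∈ graphH1Y C s t, c = a + b) ↔
      mapDomain s (projX c) = mapDomain t (projX c) := by
  constructor
  · rintro ⟨a, ha, b, hb, rfl⟩
    rw [projX_add_of_mem ha hb]
    exact ha.1
  · intro h
    refine ⟨projX c, ⟨h, fun e => ?_⟩, projY c,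
      ⟨(mapDomain_projX_eq_iff_mapDomain_projY_eq hc).mp h, fun e => ?_⟩,
      (projX_add_projY c).symm⟩ <;> simp [projX, projY]

end Chains

theorem mayer_vietoris_with_q_general
    {C V EX EY : Type*} [AddCommMonoid C]
    (hcancel : ∀ a b e : C, a + e = b + e → a = b)
    (s t : EX ⊕ EY → V)
    (VX VY : Set V) [DecidablePred (· ∈ VX ∩ VY)]
    (hX : ∀ e : EX, s (Sum.inl e) ∈ VX ∧ t (Sum.inl e) ∈ VX)
    (hY : ∀ e : EY, s (Sum.inr e) ∈ VY ∧ t (Sum.inr e) ∈ VY) :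
    ∀ c ∈ graphH1 C s t,
      ((Finsupp.filter (· ∈ VX ∩ VY) (Finsupp.mapDomain s (projX c)) =
          Finsupp.filter (· ∈ VX ∩ VY) (Finsupp.mapDomain t (projX c)) ↔
        ∃ a ∈ graphH1X C s t, ∃ b ∈ graphH1Y C s t, c = a + b) ∧
      (Finsupp.filter (· ∈ VX ∩ VY) (Finsupp.mapDomain s (projY c)) =
          Finsupp.filter (· ∈ VX ∩ VY) (Finsupp.mapDomain t (projY c)) ↔
        ∃ a ∈ graphH1X C s t, ∃ b ∈ graphH1Y C s t, c = a + b)) := by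
  have : IsRightCancelAdd C := ⟨fun e a b => hcancel a b e⟩
  have := AddCommMagma.IsRightCancelAdd.toIsCancelAdd C
  intro c hc
  have hsum := mapDomain_projX_add_mapDomain_projY_eq hc
  have hqX := filter_eq_filter_iff_of_add_eq_add (p := (· ∈ VX ∩ VY))
    (fun v hvX hvY => ⟨hvX, hvY⟩) hsum
    (mapDomain_projX_apply_eq_zero (fun e => (hX e).1) c)
    (mapDomain_projX_apply_eq_zero (fun e => (hX e).2) c)
    (mapDomain_projY_apply_eq_zero (fun e => (hY e).1) c)
    (mapDomain_projY_apply_eq_zero (fun e => (hY e).2) c)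
  have hqY := filter_eq_filter_iff_of_add_eq_add (p := (· ∈ VX ∩ VY))
    (fun v hvY hvX => ⟨hvX, hvY⟩) (by rw [add_comm, hsum, add_comm])
    (mapDomain_projY_apply_eq_zero (fun e => (hY e).1) c)
    (mapDomain_projY_apply_eq_zero (fun e => (hY e).2) c)
    (mapDomain_projX_apply_eq_zero (fun e => (hX e).1) c)
    (mapDomain_projX_apply_eq_zero (fun e => (hX e).2) c)
  have himage := exists_mem_graphH1X_mem_graphH1Y_eq_add_iff hc
  exact ⟨hqX.trans himage.symm,
    hqY.trans ((mapDomain_projX_eq_iff_mapDomain_projY_eq hc).symm.trans himage.symm)⟩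

/-- Mayer–Vietoris, second form: suppose moreover that `V = V_X ∪ V_Y`, every
edge of `X` has endpoints in `V_X` and every edge of `Y` has endpoints in `V_Y`; let `q` be
the homomorphism on 0-chains keeping the coefficients of vertices in `V_X ∩ V_Y` and killing
the rest.  If `C` is cancellative, then a 1-cycle `c` of `X ∪ Y` satisfies
`q(C[s](p_X c)) = q(C[t](p_X c))` iff `c` lies in the image of
`ι : H₁(X,C) ⊕ H₁(Y,C) → H₁(X∪Y,C)`, `ι(a,b) = a + b`; and likewise with `p_Y`. -/
theorem mayer_vietoris_with_q
    {C V EX EY : Type*} [AddCommMonoid C]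
    (hcancel : ∀ a b e : C, a + e = b + e → a = b)
    (s t : EX ⊕ EY → V)
    (VX VY : Set V) [DecidablePred (· ∈ VX ∩ VY)]
    (hunion : VX ∪ VY = Set.univ)
    (hX : ∀ e : EX, s (Sum.inl e) ∈ VX ∧ t (Sum.inl e) ∈ VX)
    (hY : ∀ e : EY, s (Sum.inr e) ∈ VY ∧ t (Sum.inr e) ∈ VY) :
    ∀ c ∈ graphH1 C s t,
      ((Finsupp.filter (· ∈ VX ∩ VY) (Finsupp.mapDomain s (projX c)) =
          Finsupp.filter (· ∈ VX ∩ VY) (Finsupp.mapDomain t (projX c)) ↔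
        ∃ a ∈ graphH1X C s t, ∃ b ∈ graphH1Y C s t, c = a + b) ∧
      (Finsupp.filter (· ∈ VX ∩ VY) (Finsupp.mapDomain s (projY c)) =
          Finsupp.filter (· ∈ VX ∩ VY) (Finsupp.mapDomain t (projY c)) ↔
        ∃ a ∈ graphH1X C s t, ∃ b ∈ graphH1Y C s t, c = a + b)) :=
  mayer_vietoris_with_q_general hcancel s t VX VY hX hY
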